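/- arXiv:2312.11846 — 5 statements merged into one kernel-verified Lean document; each statement's English description precedes it below -/
import Mathlib

section
/- The Huber loss satisfies the approximate triangle inequality with constant 1/3: for all theta, phi_i, phi_j in R^d, (1/3) H(theta - phi_i) \le H(theta - phi_j) + H(phi_i - phi_j), where H(u) = (1/2)\|u\|^2 if \|u\| \le delta and H(u) = delta(\|u\| - delta/2) otherwise. -/
/-!
The scalar Huber function is the Legendre-type envelope
`huber δ r = max_{a ≤ δ} (a r - a² / 2)`, attained at `a = min r δ`.
Evaluating the envelope of `s + t` at its maximiser `a` and splitting
`a (s + t) - a² / 2 = 2 ((a/2) s - (a/2)² / 2) + 2 ((a/2) t - (a/2)² / 2)` gives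
`huber δ (s + t) ≤ 2 (huber δ s + huber δ t)`, since `a / 2` is again admissible.
With the triangle inequality and monotonicity of `huber δ` on `[0, ∞)` this yields the
approximate triangle inequality even with the constant `1/2` in place of `1/3`.
-/

noncomputable def huber (δ r : ℝ) : ℝ :=
  if r ≤ δ then 1 / 2 * r ^ 2 else δ * (r - δ / 2)

namespace huber

variable {δ : ℝ}

theorem mul_sub_sq_le {a : ℝ} (ha : a ≤ δ) (r : ℝ) : a * r - a ^ 2 / 2 ≤ huber δ r := by
  unfold huber
  split_ifs with hr
  · nlinarith [sq_nonneg (r - a)]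
  · nlinarith [mul_le_mul_of_nonneg_left (by linarith : (δ + a) / 2 ≤ r) (sub_nonneg.2 ha)]

theorem eq_min_mul_sub_sq (δ r : ℝ) : huber δ r = min r δ * r - min r δ ^ 2 / 2 := by
  unfold huber
  split_ifs with hr
  · rw [min_eq_left hr]; ring
  · rw [min_eq_right (le_of_not_ge hr)]; ring

theorem nonneg (hδ : 0 ≤ δ) (r : ℝ) : 0 ≤ huber δ r := by
  simpa using mul_sub_sq_le hδ r

theorem monotoneOn (hδ : 0 ≤ δ) : MonotoneOn (huber δ) (Set.Ici 0) := by
  intro r hr r' _ hrr'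
  have ha : 0 ≤ min r δ := le_min hr hδ
  calc huber δ r = min r δ * r - min r δ ^ 2 / 2 := eq_min_mul_sub_sq δ r
    _ ≤ min r δ * r' - min r δ ^ 2 / 2 := by gcongr
    _ ≤ huber δ r' := mul_sub_sq_le (min_le_right r δ) r'

theorem add_le (hδ : 0 ≤ δ) (s t : ℝ) :
    huber δ (s + t) ≤ 2 * (huber δ s + huber δ t) := by
  set a := min (s + t) δ
  have ha : a / 2 ≤ δ := by linarith [min_le_right (s + t) δ]
  calc huber δ (s + t) = a * (s + t) - a ^ 2 / 2 := eq_min_mul_sub_sq δ (s + t)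
    _ = 2 * ((a / 2 * s - (a / 2) ^ 2 / 2) + (a / 2 * t - (a / 2) ^ 2 / 2)) := by ring
    _ ≤ 2 * (huber δ s + huber δ t) := by gcongr <;> exact mul_sub_sq_le ha _

theorem norm_sub_le {E : Type*} [SeminormedAddCommGroup E] (hδ : 0 ≤ δ) (u v : E) :
    huber δ ‖u - v‖ ≤ 2 * (huber δ ‖u‖ + huber δ ‖v‖) :=
  (monotoneOn hδ (norm_nonneg _) (add_nonneg (norm_nonneg u) (norm_nonneg v))
    (_root_.norm_sub_le u v)).trans (add_le hδ _ _)

end huber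

theorem huber_approx_triangle {E : Type*} [SeminormedAddCommGroup E]
    (delta : ℝ) (hdelta : 0 < delta)
    (H : E → ℝ)
    (hH : ∀ u : E, H u = if ‖u‖ ≤ delta then (1 / 2) * ‖u‖ ^ 2
                          else delta * (‖u‖ - delta / 2))
    (theta phi_i phi_j : E) :
    (1 / 3 : ℝ) * H (theta - phi_i) ≤ H (theta - phi_j) + H (phi_i - phi_j) := by
  have hH' : ∀ u, H u = huber delta ‖u‖ := hH
  have hbound := huber.norm_sub_le hdelta.le (theta - phi_j) (phi_i - phi_j)
  rw [sub_sub_sub_cancel_right] at hbound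
  have hnonneg := huber.nonneg hdelta.le ‖theta - phi_i‖
  rw [hH', hH', hH']
  linarith
end

section
/- Let A_i, A_j be symmetric positive definite matrices and let c = (1/2) lambda, where lambda is the largest scalar such that A_i - lambda A_j and A_j - lambda A_i are both positive semidefinite. Then for all theta, phi_i, phi_j in R^d: c \|theta - phi_i\|_{A_i}^2 \le \|theta - phi_j\|_{A_j}^2 + \|phi_i - phi_j\|_{A_j}^2. -/
open Matrix

theorem Matrix.dotProduct_mulVec_add_add_sub {n R : Type*} [Fintype n] [CommRing R]
    (A : Matrix n n R) (a b : n → R) :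
    (a + b) ⬝ᵥ A *ᵥ (a + b) + (a - b) ⬝ᵥ A *ᵥ (a - b) =
      2 * (a ⬝ᵥ A *ᵥ a + b ⬝ᵥ A *ᵥ b) := by
  simp only [mulVec_add, mulVec_sub, dotProduct_add, dotProduct_sub, add_dotProduct,
    sub_dotProduct]
  ring

theorem Matrix.PosSemidef.dotProduct_mulVec_sub_le {n : Type*} [Fintype n]
    {A : Matrix n n ℝ} (hA : A.PosSemidef) (a b : n → ℝ) :
    (a - b) ⬝ᵥ A *ᵥ (a - b) ≤ 2 * (a ⬝ᵥ A *ᵥ a + b ⬝ᵥ A *ᵥ b) := by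
  have := hA.dotProduct_mulVec_nonneg (a + b)
  rw [star_trivial] at this
  linarith [A.dotProduct_mulVec_add_add_sub a b]

theorem Matrix.PosSemidef.mul_dotProduct_mulVec_le {n : Type*} [Fintype n]
    {A B : Matrix n n ℝ} {c : ℝ} (h : (B - c • A).PosSemidef) (u : n → ℝ) :
    c * (u ⬝ᵥ A *ᵥ u) ≤ u ⬝ᵥ B *ᵥ u := by
  have := h.dotProduct_mulVec_nonneg u
  simp only [star_trivial, sub_mulVec, smul_mulVec, dotProduct_sub, dotProduct_smul,
    smul_eq_mul] at this
  linarith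

theorem mahalanobis_approx_triangle_i_general {d : ℕ}
    (Ai Aj : Matrix (Fin d) (Fin d) ℝ)
    (hAj : Aj.PosDef)
    (lam : ℝ)
    (hlam : IsGreatest {c : ℝ | (Ai - c • Aj).PosSemidef ∧ (Aj - c • Ai).PosSemidef} lam)
    (c : ℝ) (hc : c = (1 / 2) * lam) :
    ∀ theta phi_i phi_j : Fin d → ℝ,
      c * ((theta - phi_i) ⬝ᵥ Ai.mulVec (theta - phi_i)) ≤
        (theta - phi_j) ⬝ᵥ Aj.mulVec (theta - phi_j) +
          (phi_i - phi_j) ⬝ᵥ Aj.mulVec (phi_i - phi_j) := by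
  intro theta phi_i phi_j
  have hsplit : theta - phi_i = (theta - phi_j) - (phi_i - phi_j) := by abel
  have hcompare := hlam.1.2.mul_dotProduct_mulVec_le (theta - phi_i)
  have hparallelogram := hAj.posSemidef.dotProduct_mulVec_sub_le (theta - phi_j) (phi_i - phi_j)
  rw [← hsplit] at hparallelogram
  rw [hc]
  linarith

theorem mahalanobis_approx_triangle_i {d : ℕ}
    (Ai Aj : Matrix (Fin d) (Fin d) ℝ)
    (hAi : Ai.PosDef) (hAj : Aj.PosDef)
    (lam : ℝ)
    (hlam : IsGreatest {c : ℝ | (Ai - c • Aj).PosSemidef ∧ (Aj - c • Ai).PosSemidef} lam)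
    (c : ℝ) (hc : c = (1 / 2) * lam) :
    ∀ theta phi_i phi_j : Fin d → ℝ,
      c * ((theta - phi_i) ⬝ᵥ Ai.mulVec (theta - phi_i)) ≤
        (theta - phi_j) ⬝ᵥ Aj.mulVec (theta - phi_j) +
          (phi_i - phi_j) ⬝ᵥ Aj.mulVec (phi_i - phi_j) :=
  mahalanobis_approx_triangle_i_general Ai Aj hAj lam hlam c hc
end

section
/- Let A_i, A_j be symmetric positive definite matrices and c = (1/2) lambda with lambda as the largest scalar such that A_i - lambda A_j and A_j - lambda A_i are positive semidefinite. Then for all theta, phi_i, phi_j in R^d: c \|phi_j - phi_i\|_{A_i}^2 \le \|theta - phi_j\|_{A_j}^2 + \|theta - phi_i\|_{A_i}^2. -/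
/-! Write `u = θ - φᵢ`, `v = θ - φⱼ`, so that `φⱼ - φᵢ = u - v`. For `0 ≤ λ ≤ 1` the parallelogram law and
`λ Aᵢ ≤ Aⱼ` give `(λ/2)‖u - v‖²_{Aᵢ} ≤ λ‖u‖²_{Aᵢ} + λ‖v‖²_{Aᵢ} ≤ ‖u‖²_{Aᵢ} + ‖v‖²_{Aⱼ}`. For `λ > 1` the two
comparisons `Aᵢ ≥ λ Aⱼ ≥ λ² Aᵢ` force `Aᵢ` to vanish as a quadratic form, and for `λ ≤ 0` the left side is
nonpositive. -/

open Matrix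

namespace Matrix

variable {n : Type*} [Fintype n]

theorem PosSemidef.dotProduct_mulVec_nonneg' {A : Matrix n n ℝ} (hA : A.PosSemidef) (x : n → ℝ) :
    0 ≤ x ⬝ᵥ A *ᵥ x := by
  simpa using hA.dotProduct_mulVec_nonneg x

theorem mul_dotProduct_mulVec_le_of_posSemidef_sub {A B : Matrix n n ℝ} {l : ℝ}
    (h : (B - l • A).PosSemidef) (x : n → ℝ) : l * (x ⬝ᵥ A *ᵥ x) ≤ x ⬝ᵥ B *ᵥ x := by
  have := h.dotProduct_mulVec_nonneg' x
  rw [sub_mulVec, dotProduct_sub, smul_mulVec, dotProduct_smul, smul_eq_mul] at this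
  linarith

theorem dotProduct_mulVec_sub_add_add (A : Matrix n n ℝ) (u v : n → ℝ) :
    (u - v) ⬝ᵥ A *ᵥ (u - v) + (u + v) ⬝ᵥ A *ᵥ (u + v) =
      2 * (u ⬝ᵥ A *ᵥ u) + 2 * (v ⬝ᵥ A *ᵥ v) := by
  simp only [mulVec_add, mulVec_sub, dotProduct_add, dotProduct_sub, add_dotProduct,
    sub_dotProduct]
  ring

theorem PosSemidef.dotProduct_mulVec_sub_le_s8 {A : Matrix n n ℝ} (hA : A.PosSemidef) (u v : n → ℝ) :
    (u - v) ⬝ᵥ A *ᵥ (u - v) ≤ 2 * (u ⬝ᵥ A *ᵥ u) + 2 * (v ⬝ᵥ A *ᵥ v) := by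
  linarith [dotProduct_mulVec_sub_add_add A u v, hA.dotProduct_mulVec_nonneg' (u + v)]

theorem dotProduct_mulVec_nonpos_of_one_lt {A B : Matrix n n ℝ} {l : ℝ} (hl : 1 < l)
    (hAB : (A - l • B).PosSemidef) (hBA : (B - l • A).PosSemidef) (x : n → ℝ) :
    x ⬝ᵥ A *ᵥ x ≤ 0 := by
  have hAB_x := mul_dotProduct_mulVec_le_of_posSemidef_sub hAB x
  have hBA_x := mul_dotProduct_mulVec_le_of_posSemidef_sub hBA x
  have h_sq : l * (l * (x ⬝ᵥ A *ᵥ x)) ≤ x ⬝ᵥ A *ᵥ x := by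
    nlinarith [mul_le_mul_of_nonneg_left hBA_x (zero_le_one.trans hl.le)]
  by_contra! h_pos
  nlinarith [mul_lt_mul_of_pos_right (show 1 < l * l by nlinarith) h_pos]

theorem half_mul_dotProduct_mulVec_sub_le {A B : Matrix n n ℝ} {l : ℝ} (hA : A.PosSemidef)
    (hB : B.PosSemidef) (hAB : (A - l • B).PosSemidef) (hBA : (B - l • A).PosSemidef)
    (u v : n → ℝ) :
    l / 2 * ((u - v) ⬝ᵥ A *ᵥ (u - v)) ≤ v ⬝ᵥ B *ᵥ v + u ⬝ᵥ A *ᵥ u := by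
  have hAu := hA.dotProduct_mulVec_nonneg' u
  have hAv := hA.dotProduct_mulVec_nonneg' v
  have hBv := hB.dotProduct_mulVec_nonneg' v
  have hA_sub := hA.dotProduct_mulVec_nonneg' (u - v)
  rcases le_or_gt l 0 with hl | hl
  · nlinarith
  rcases le_or_gt l 1 with hl1 | hl1
  · have hBA_v := mul_dotProduct_mulVec_le_of_posSemidef_sub hBA v
    nlinarith [hA.dotProduct_mulVec_sub_le_s8 u v]
  · nlinarith [dotProduct_mulVec_nonpos_of_one_lt hl1 hAB hBA (u - v)]

end Matrix

theorem mahalanobis_approx_triangle_ii {d : ℕ}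
    (Ai Aj : Matrix (Fin d) (Fin d) ℝ)
    (hAi : Ai.PosDef) (hAj : Aj.PosDef)
    (lam : ℝ)
    (hlam : IsGreatest {c : ℝ | (Ai - c • Aj).PosSemidef ∧ (Aj - c • Ai).PosSemidef} lam)
    (c : ℝ) (hc : c = (1 / 2) * lam) :
    ∀ theta phi_i phi_j : Fin d → ℝ,
      c * ((phi_j - phi_i) ⬝ᵥ Ai.mulVec (phi_j - phi_i)) ≤
        (theta - phi_j) ⬝ᵥ Aj.mulVec (theta - phi_j) +
          (theta - phi_i) ⬝ᵥ Ai.mulVec (theta - phi_i) := by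
  intro theta phi_i phi_j
  have hdiff : phi_j - phi_i = (theta - phi_i) - (theta - phi_j) := by abel
  rw [hc, hdiff, one_div_mul_eq_div]
  exact half_mul_dotProduct_mulVec_sub_le hAi.posSemidef hAj.posSemidef hlam.1.1 hlam.1.2 _ _
end

section
/- Let B be a finite nonempty set of indices with points phi_j in R^d and loss functions L_i satisfying: for every j, i in B and the minimizer J of theta \mapsto \sum_{l \in B} L_l(theta, phi_l) over R^d, c_{ij} L_i(phi_j, phi_i) \le L_j(J, phi_j) + L_i(J, phi_i), with c_{ij} = c_{ji} > 0. If a center theta = phi_j is chosen uniformly at random from B, then E[\sum_{i \in B} L_i(theta, phi_i)] \le (max_{j \in B} (2/|B|) \sum_{i \in B} 1/c_{ij}) * \sum_{i \in B} L_i(J, phi_i). -/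
/-!
Dividing the relaxed triangle inequality by `c i j` bounds `L i (phi j)` by
`(L j J + L i J) / c i j`. Summed over all pairs, the symmetry of `c` lets both terms be charged
to the same index, which gives `2 ∑ j, L j J * ∑ i, 1 / c i j`; each inner sum is at most the
maximum over `j`, and averaging over the uniform choice of `j` supplies the factor `1 / |B|`.
-/

open Finset

namespace Finset

variable {ι : Type*} {s : Finset ι}

theorem sum_sum_add_mul_of_symm (a : ι → ℝ) (w : ι → ι → ℝ)
    (hw : ∀ i ∈ s, ∀ j ∈ s, w i j = w j i) :
    ∑ j ∈ s, ∑ i ∈ s, (a j + a i) * w i j = 2 * ∑ j ∈ s, a j * ∑ i ∈ s, w i j := by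
  have hswap : ∑ j ∈ s, ∑ i ∈ s, a i * w i j = ∑ j ∈ s, ∑ i ∈ s, a j * w i j := by
    rw [sum_comm]
    exact sum_congr rfl fun j hj => sum_congr rfl fun i hi => by rw [hw j hj i hi]
  simp only [add_mul, sum_add_distrib, hswap, ← two_mul, mul_sum]

theorem sum_mul_le_sup'_mul_sum (hs : s.Nonempty) (a b : ι → ℝ) (ha : ∀ j ∈ s, 0 ≤ a j) :
    ∑ j ∈ s, a j * b j ≤ s.sup' hs b * ∑ j ∈ s, a j := by
  rw [mul_sum]
  exact sum_le_sum fun j hj => by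
    rw [mul_comm]
    exact mul_le_mul_of_nonneg_right (le_sup' b hj) (ha j hj)

end Finset

theorem uniform_seeding_bound_general {ι : Type*} {d : ℕ}
    (B : Finset ι) (hB : B.Nonempty)
    (phi : ι → EuclideanSpace ℝ (Fin d))
    (L : ι → EuclideanSpace ℝ (Fin d) → ℝ)
    (hL_nonneg : ∀ i θ, 0 ≤ L i θ)
    (c : ι → ι → ℝ)
    (hc_pos : ∀ i ∈ B, ∀ j ∈ B, 0 < c i j)
    (hc_symm : ∀ i j, c i j = c j i)
    (J : EuclideanSpace ℝ (Fin d))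
    (htri : ∀ i ∈ B, ∀ j ∈ B, c i j * L i (phi j) ≤ L j J + L i J) :
    (1 / (B.card : ℝ)) * ∑ j ∈ B, ∑ i ∈ B, L i (phi j) ≤
      (B.sup' hB fun j => (2 / (B.card : ℝ)) * ∑ i ∈ B, 1 / c i j) *
        ∑ i ∈ B, L i J := by
  have hpair : ∀ j ∈ B, ∀ i ∈ B, L i (phi j) ≤ (L j J + L i J) * (1 / c i j) := by
    intro j hj i hi
    rw [mul_one_div, le_div_iff₀ (hc_pos i hi j hj), mul_comm]
    exact htri i hi j hj
  calc (1 / (B.card : ℝ)) * ∑ j ∈ B, ∑ i ∈ B, L i (phi j)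
      ≤ (1 / (B.card : ℝ)) * ∑ j ∈ B, ∑ i ∈ B, (L j J + L i J) * (1 / c i j) := by
        gcongr with j hj i hi
        exact hpair j hj i hi
    _ = ∑ j ∈ B, L j J * ((2 / (B.card : ℝ)) * ∑ i ∈ B, 1 / c i j) := by
        rw [sum_sum_add_mul_of_symm _ _ fun i _ j _ => by rw [hc_symm], mul_sum, mul_sum]
        exact sum_congr rfl fun j _ => by ring
    _ ≤ _ := sum_mul_le_sup'_mul_sum hB _ _ fun j _ => hL_nonneg j J

theorem uniform_seeding_bound {ι : Type*} [DecidableEq ι] {d : ℕ}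
    (B : Finset ι) (hB : B.Nonempty)
    (phi : ι → EuclideanSpace ℝ (Fin d))
    (L : ι → EuclideanSpace ℝ (Fin d) → ℝ)
    (hL_nonneg : ∀ i θ, 0 ≤ L i θ)
    (c : ι → ι → ℝ)
    (hc_pos : ∀ i ∈ B, ∀ j ∈ B, 0 < c i j)
    (hc_symm : ∀ i j, c i j = c j i)
    (J : EuclideanSpace ℝ (Fin d))
    (hJ : ∀ θ, ∑ l ∈ B, L l J ≤ ∑ l ∈ B, L l θ)
    (htri : ∀ i ∈ B, ∀ j ∈ B, c i j * L i (phi j) ≤ L j J + L i J) :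
    (1 / (B.card : ℝ)) * ∑ j ∈ B, ∑ i ∈ B, L i (phi j) ≤
      (B.sup' hB fun j => (2 / (B.card : ℝ)) * ∑ i ∈ B, 1 / c i j) *
        ∑ i ∈ B, L i J :=
  uniform_seeding_bound_general B hB phi L hL_nonneg c hc_pos hc_symm J htri
end

section
/- Let B be a finite nonempty index set with nonnegative losses L_i(\cdot, phi_i) satisfying the symmetric approximate triangle inequality c_{ji} L_j(theta, phi_j) \le L_i(theta, phi_i) + L_i(phi_j, phi_i) for all theta, with c_{ij} = c_{ji} > 0. Let Theta_t be any finite set of existing centers, with current loss L_i(Theta_t, phi_i) = min_{theta in Theta_t} L_i(theta, phi_i). If a new center theta = phi_j is sampled from B with probability proportional to L_j(Theta_t, phi_j), then E[\sum_{i \in B} min(L_i(Theta_t, phi_i), L_i(phi_j, phi_i))] \le \sum_{j \in B} (2/\sum_{i \in B} c_{ij}) \sum_{i \in B} L_i(phi_j, phi_i). -/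
/-! For a fixed candidate `φ_j`, taking the minimum over `T` in the approximate triangle inequality
and summing over `i ∈ B` gives `(∑ᵢ c i j) · D j ≤ W + Λ_j`, where `Λ_j = ∑ᵢ L i (φ_j)`. The updated
cost `S_j = ∑ᵢ min (D i) (L i φ_j)` is at most both `W` and `Λ_j`, so
`(∑ᵢ c i j) · D j · S_j ≤ (W + Λ_j) · S_j ≤ 2 W Λ_j`, which bounds each term of the expectation. -/

open Finset

theorem mul_inf'_le_inf'_add {α : Type*} {T : Finset α} (hT : T.Nonempty) {f g : α → ℝ}
    {c a : ℝ} (hc : 0 ≤ c) (h : ∀ θ ∈ T, c * f θ ≤ g θ + a) :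
    c * T.inf' hT f ≤ T.inf' hT g + a := by
  obtain ⟨θ, hθ, hθg⟩ := T.exists_mem_eq_inf' hT g
  calc c * T.inf' hT f ≤ c * f θ := mul_le_mul_of_nonneg_left (inf'_le f hθ) hc
    _ ≤ g θ + a := h θ hθ
    _ = T.inf' hT g + a := by rw [hθg]

theorem sum_mul_inf'_le_sum_inf'_add_sum {ι α : Type*} (B : Finset ι) {T : Finset α}
    (hT : T.Nonempty) (L : ι → α → ℝ) {w a : ι → ℝ} {j : ι} (hw : ∀ i ∈ B, 0 ≤ w i)
    (h : ∀ i ∈ B, ∀ θ ∈ T, w i * L j θ ≤ L i θ + a i) :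
    (∑ i ∈ B, w i) * T.inf' hT (L j) ≤ ∑ i ∈ B, T.inf' hT (L i) + ∑ i ∈ B, a i := by
  rw [sum_mul, ← sum_add_distrib]
  exact sum_le_sum fun i hi => mul_inf'_le_inf'_add hT (hw i hi) (h i hi)

theorem div_mul_le_two_div_mul_of_mul_le_add {D W S Λ C : ℝ} (hW : 0 < W) (hC : 0 < C)
    (hS : 0 ≤ S) (hSW : S ≤ W) (hSΛ : S ≤ Λ) (hD : C * D ≤ W + Λ) :
    D / W * S ≤ 2 / C * Λ := by
  rw [div_mul_eq_mul_div, div_mul_eq_mul_div, div_le_div_iff₀ hW hC]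
  nlinarith [mul_le_mul_of_nonneg_right hD hS, mul_le_mul_of_nonneg_left hSΛ hW.le,
    mul_le_mul_of_nonneg_left hSW (hS.trans hSΛ)]

theorem adaptive_sampling_bound_general {ι : Type*} {d : ℕ}
    (B : Finset ι)
    (phi : ι → EuclideanSpace ℝ (Fin d))
    (L : ι → EuclideanSpace ℝ (Fin d) → ℝ)
    (hL_nonneg : ∀ i θ, 0 ≤ L i θ)
    (c : ι → ι → ℝ)
    (hc_pos : ∀ i ∈ B, ∀ j ∈ B, 0 < c i j)
    (hc_symm : ∀ i j, c i j = c j i)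
    (htri : ∀ i ∈ B, ∀ j ∈ B, ∀ θ, c j i * L j θ ≤ L i θ + L i (phi j))
    (T : Finset (EuclideanSpace ℝ (Fin d))) (hT : T.Nonempty)
    (D : ι → ℝ)
    (hD : ∀ i, D i = T.inf' hT (fun θ => L i θ))
    (W : ℝ) (hW : W = ∑ j ∈ B, D j) (hWpos : 0 < W) :
    ∑ j ∈ B, (D j / W) * ∑ i ∈ B, min (D i) (L i (phi j)) ≤
      ∑ j ∈ B, (2 / ∑ i ∈ B, c i j) * ∑ i ∈ B, L i (phi j) := by
  obtain rfl : D = fun i => T.inf' hT (L i) := funext hD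
  subst hW
  refine sum_le_sum fun j hj => div_mul_le_two_div_mul_of_mul_le_add hWpos
    (sum_pos (fun i hi => hc_pos i hi j hj) ⟨j, hj⟩) ?_ ?_ ?_ ?_
  · exact sum_nonneg fun i _ => le_min (le_inf' _ _ fun θ _ => hL_nonneg i θ) (hL_nonneg i _)
  · exact sum_le_sum fun i _ => min_le_left _ _
  · exact sum_le_sum fun i _ => min_le_right _ _
  · exact sum_mul_inf'_le_sum_inf'_add_sum B hT L (fun i hi => (hc_pos i hi j hj).le)
      fun i hi θ _ => hc_symm i j ▸ htri i hi j hj θ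

theorem adaptive_sampling_bound {ι : Type*} [DecidableEq ι] {d : ℕ}
    (B : Finset ι) (hB : B.Nonempty)
    (phi : ι → EuclideanSpace ℝ (Fin d))
    (L : ι → EuclideanSpace ℝ (Fin d) → ℝ)
    (hL_nonneg : ∀ i θ, 0 ≤ L i θ)
    (c : ι → ι → ℝ)
    (hc_pos : ∀ i ∈ B, ∀ j ∈ B, 0 < c i j)
    (hc_symm : ∀ i j, c i j = c j i)
    (htri : ∀ i ∈ B, ∀ j ∈ B, ∀ θ, c j i * L j θ ≤ L i θ + L i (phi j))
    (T : Finset (EuclideanSpace ℝ (Fin d))) (hT : T.Nonempty)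
    (D : ι → ℝ)
    (hD : ∀ i, D i = T.inf' hT (fun θ => L i θ))
    (W : ℝ) (hW : W = ∑ j ∈ B, D j) (hWpos : 0 < W) :
    ∑ j ∈ B, (D j / W) * ∑ i ∈ B, min (D i) (L i (phi j)) ≤
      ∑ j ∈ B, (2 / ∑ i ∈ B, c i j) * ∑ i ∈ B, L i (phi j) :=
  adaptive_sampling_bound_general B phi L hL_nonneg c hc_pos hc_symm htri T hT D hD W hW hWpos
end
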